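/- Let F(x,y) = (x + p_k(x,y) + higher, y + q_k(x,y) + higher) be tangent to the identity of order k ≥ 2, and let [1 : v_0] be a characteristic direction of F, i.e., q_k(1, v_0) − v_0 p_k(1, v_0) = 0. Then the lift F̃ of F to the blow-up chart (x,v) ↦ (x,xv) is tangent to the identity at the point (0, v_0) with order at least k, i.e., ord(F̃_{(0,v_0)}) ≥ ord(F). -/

import Mathlib

open Finsupp

noncomputable section

abbrev F2 : Type := MvPowerSeries (Fin 2) ℂ

/-- total degree of a monomial exponent -/
def deg (d : Fin 2 →₀ ℕ) : ℕ := d 0 + d 1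

/-- the exponent (m, n) -/
def idx (m n : ℕ) : Fin 2 →₀ ℕ := Finsupp.single 0 m + Finsupp.single 1 n

/-- partial derivative of a formal power series -/
def pd (i : Fin 2) (f : F2) : F2 :=
  fun d => ((d i : ℂ) + 1) * MvPowerSeries.coeff (R := ℂ) (d + Finsupp.single i 1) f

/-- the derivation a ∂/∂x + b ∂/∂y applied to g -/
def vf (a b g : F2) : F2 := a * pd 0 g + b * pd 1 g

/-- `ordGE f k` : the order ν(f) is at least k -/
def ordGE (f : F2) (k : ℕ) : Prop :=
  ∀ d : Fin 2 →₀ ℕ, deg d < k → MvPowerSeries.coeff (R := ℂ) d f = 0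

/-- exp X (g) = Σ_j (1/j!) X^j(g), coefficientwise -/
def expX (a b g : F2) : F2 :=
  fun d => ∑' j : ℕ, ((j.factorial : ℂ))⁻¹ * MvPowerSeries.coeff (R := ℂ) d ((vf a b)^[j] g)

/-- degree-k homogeneous part -/
def HT (k : ℕ) (f : F2) : F2 :=
  fun d => if deg d = k then MvPowerSeries.coeff (R := ℂ) d f else 0

/-- substitution y := x·v :  f(x, xv), in coordinates (x, v) -/
def blowup (f : F2) : F2 :=
  fun d => if d 1 ≤ d 0 then MvPowerSeries.coeff (R := ℂ) (idx (d 0 - d 1) (d 1)) f else 0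

/-- `dehom k f` = f_k(1, v), where f_k is the degree-k homogeneous part of f -/
def dehom (k : ℕ) (f : F2) : F2 :=
  fun d => if d 0 = 0 ∧ d 1 ≤ k then MvPowerSeries.coeff (R := ℂ) (idx (k - d 1) (d 1)) f else 0

/-- evaluation of the degree-k homogeneous part of f at (1, v0) -/
def evk (k : ℕ) (v0 : ℂ) (f : F2) : ℂ :=
  ∑ n ∈ Finset.range (k+1), MvPowerSeries.coeff (R := ℂ) (idx (k-n) n) f * v0 ^ n

/-- the linear change of coordinates f(x, y) ↦ f(x, y + v0·x) -/
def shear (v0 : ℂ) (f : F2) : F2 :=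
  fun d => ∑ j ∈ Finset.range (deg d + 1),
    if d 1 ≤ j ∧ j - d 1 ≤ d 0 then
      (j.choose (d 1) : ℂ) * v0 ^ (j - d 1) *
        MvPowerSeries.coeff (R := ℂ) (idx (d 0 - (j - d 1)) j) f
    else 0

/-- the coordinate x -/
def Xv : F2 := MvPowerSeries.X 0
/-- the coordinate y (alias v in the blow-up chart) -/
def Yv : F2 := MvPowerSeries.X 1

end

/-!
In the centred blow-up chart the lift is `(x + E, v + D)` with `E` the blow-up of the sheared
`p`, which visibly has order `≥ k`. The second component is only known through
`(x + E) * (v + D) = x * v + C`, where `C` is the blow-up of the sheared `q - v₀ p`. Blowing up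
sends `xᵃ yᵇ` to `xᵃ⁺ᵇ vᵇ`, raising the degree unless `b = 0`, and the characteristic equation
kills the `xᵏ` coefficient, so `C` has order `≥ k + 1`.
Hence `x * D = (C - E * v) - E * D` with `C - E * v` of order `≥ k + 1`, and two rounds of
bootstrapping (order `≥ k - 1 ≥ 1` for `D`, then `≥ k`) give the claim.
-/

open MvPowerSeries

@[simp]
lemma idx_apply_zero (m n : ℕ) : idx m n 0 = m := by
  simp [idx]

@[simp]
lemma idx_apply_one (m n : ℕ) : idx m n 1 = n := by
  simp [idx]

lemma deg_eq_degree (d : Fin 2 →₀ ℕ) : deg d = d.degree := by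
  rw [Finsupp.degree_eq_sum, Fin.sum_univ_two, deg]

lemma deg_idx (m n : ℕ) : deg (idx m n) = m + n := by
  simp [deg]

lemma ordGE_iff_le_order {f : F2} {k : ℕ} : ordGE f k ↔ (k : ℕ∞) ≤ f.order := by
  simp only [ordGE, deg_eq_degree]
  refine ⟨fun h => nat_le_order h, fun h d hd => coeff_of_lt_order ?_⟩
  exact lt_of_lt_of_le (by exact_mod_cast hd) h

lemma ordGE.mono {f : F2} {m n : ℕ} (hf : ordGE f n) (hmn : m ≤ n) : ordGE f m :=
  fun d hd => hf d (hd.trans_le hmn)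

lemma ordGE.sub {f g : F2} {k : ℕ} (hf : ordGE f k) (hg : ordGE g k) : ordGE (f - g) k := by
  intro d hd
  rw [map_sub, hf d hd, hg d hd, sub_zero]

lemma ordGE.smul {f : F2} {k : ℕ} (c : ℂ) (hf : ordGE f k) : ordGE (c • f) k := by
  intro d hd
  rw [map_smul, hf d hd, smul_zero]

lemma ordGE.mul {f g : F2} {m n : ℕ} (hf : ordGE f m) (hg : ordGE g n) : ordGE (f * g) (m + n) := by
  rw [ordGE_iff_le_order] at *
  calc ((m + n : ℕ) : ℕ∞) = m + n := Nat.cast_add m n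
    _ ≤ f.order + g.order := add_le_add hf hg
    _ ≤ (f * g).order := le_order_mul

lemma ordGE_zero (f : F2) : ordGE f 0 :=
  fun _ hd => absurd hd (Nat.not_lt_zero _)

lemma ordGE_Yv : ordGE Yv 1 := by
  intro d hd
  obtain rfl : d = 0 := by
    rw [← Finsupp.degree_eq_zero_iff, ← deg_eq_degree]
    omega
  exact coeff_zero_X 1

lemma ordGE_of_ordGE_Xv_mul {f : F2} {n : ℕ} (h : ordGE (Xv * f) (n + 1)) : ordGE f n := by
  intro d hd
  have hdeg : deg (Finsupp.single 0 1 + d) < n + 1 := by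
    rw [deg_eq_degree, map_add, Finsupp.degree_single, ← deg_eq_degree]
    omega
  simpa [Xv, X_def, coeff_add_monomial_mul] using h _ hdeg

lemma shear_ordGE {f : F2} {k : ℕ} (v0 : ℂ) (hf : ordGE f k) : ordGE (shear v0 f) k := by
  intro d hd
  rw [coeff_apply, shear]
  refine Finset.sum_eq_zero fun j _ => ?_
  split_ifs
  · rw [hf _ (by rw [deg_idx]; unfold deg at hd; omega), mul_zero]
  · rfl

lemma coeff_idx_zero_shear (v0 : ℂ) (f : F2) (k : ℕ) :
    coeff (idx k 0) (shear v0 f) = evk k v0 f := by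
  rw [coeff_apply, shear, evk, deg_idx, add_zero]
  refine Finset.sum_congr rfl fun j hj => ?_
  rw [Finset.mem_range] at hj
  simp only [idx_apply_zero, idx_apply_one, Nat.sub_zero, Nat.choose_zero_right]
  rw [if_pos ⟨Nat.zero_le _, by omega⟩]
  push_cast
  ring

lemma blowup_ordGE {f : F2} {k : ℕ} (hf : ordGE f k) : ordGE (blowup f) k := by
  intro d hd
  rw [coeff_apply, blowup]
  split_ifs
  · exact hf _ (by rw [deg_idx]; unfold deg at hd; omega)
  · rfl

lemma blowup_ordGE_succ {f : F2} {k : ℕ} (hf : ordGE f k) (hxk : coeff (idx k 0) f = 0) :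
    ordGE (blowup f) (k + 1) := by
  intro d hd
  rw [coeff_apply, blowup]
  split_ifs with hle
  · unfold deg at hd
    obtain hlt | ⟨hx, hv⟩ : d 0 < k ∨ d 0 = k ∧ d 1 = 0 := by omega
    · exact hf _ (by rw [deg_idx]; omega)
    · simpa [hx, hv] using hxk
  · rfl

lemma ordGE_of_Xv_mul_eq {D E R : F2} {k : ℕ} (hk : 2 ≤ k) (hE : ordGE E k)
    (hR : ordGE R (k + 1)) (hD : Xv * D = R - E * D) : ordGE D k := by
  have hD_pred : ordGE D (k - 1) := by
    have hED : ordGE (E * D) k := by simpa using hE.mul (ordGE_zero D)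
    refine ordGE_of_ordGE_Xv_mul ?_
    rw [Nat.sub_add_cancel (by omega), hD]
    exact (hR.mono k.le_succ).sub hED
  have hED : ordGE (E * D) (k + 1) := (hE.mul hD_pred).mono (by omega)
  exact ordGE_of_ordGE_Xv_mul (hD ▸ hR.sub hED)

/-- The germ of the lift at `(0, v0)` is written in the coordinates centred there: `shear v0`
moves the direction `[1 : v0]` to `[1 : 0]`, and `blowup` is the chart `(x, v) ↦ (x, x v)`.
`A`, `B` are the components of the lift, characterised by `π ∘ F̃ = F ∘ π`. -/
theorem lift_order_at_characteristic_direction (p q : F2) (k : ℕ) (hk : 2 ≤ k)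
    (hp : ordGE p k) (hq : ordGE q k)
    (v0 : ℂ) (hchar : evk k v0 q = v0 * evk k v0 p)
    (A B : F2)
    (hA : A = Xv + blowup (shear v0 p))
    (hB : A * B = Xv * Yv + blowup (shear v0 q - v0 • shear v0 p)) :
    ordGE (A - Xv) k ∧ ordGE (B - Yv) k := by
  set E := blowup (shear v0 p)
  set C := blowup (shear v0 q - v0 • shear v0 p)
  have hE : ordGE E k := blowup_ordGE (shear_ordGE v0 hp)
  have hC : ordGE C (k + 1) := by
    refine blowup_ordGE_succ ((shear_ordGE v0 hq).sub ((shear_ordGE v0 hp).smul v0)) ?_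
    rw [map_sub, map_smul, coeff_idx_zero_shear, coeff_idx_zero_shear, hchar, smul_eq_mul,
      sub_self]
  subst hA
  refine ⟨by simpa using hE, ordGE_of_Xv_mul_eq hk hE (hC.sub (hE.mul ordGE_Yv)) ?_⟩
  linear_combination hB
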